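/- arXiv:1802.05175 — 2 statements merged into one kernel-verified Lean document; each statement's English description precedes it below -/
import Mathlib

section
/- Fix an integer J ≥ 1 and reals z_1, …, z_J ∈ (0,1]. For ω ∈ {+1,−1}^n let U_j(ω) be the number of maximal blocks of consecutive +1's in ω of length exactly j, and define the weight W^{(J)}(ω) := ∏_{j=1}^J z_j^{U_j(ω)} (maximal blocks of +1's of length greater than J contribute the factor 1). Let a_n := 2^{−n} ∑_{ω ∈ {+1,−1}^n} W^{(J)}(ω) (with a_0 := 1). Then limsup_{n→∞} a_n^{1/n} = 1/w_c(J), where w_c(J) is the smallest positive root of φ_J(w) := 1 − (w/2)(1 + ∑_{j=1}^J (w/2)^j z_j + (w/2)^{J+1}/(1 − w/2)). -/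
/-- The `p`-th step (`+1` or `-1`) of the sign sequence `ω`, extended by `0` outside. -/
def stepB (n : ℕ) (ω : Fin n → Bool) (p : ℕ) : ℤ :=
  if hp : p < n then (if ω ⟨p, hp⟩ then 1 else -1) else 0

/-- Number of maximal blocks of consecutive `+1`'s of length exactly `j` in `ω`. -/
def upBlocks (n : ℕ) (ω : Fin n → Bool) (j : ℕ) : ℕ :=
  ((Finset.range n).filter fun i =>
    (∀ m < j, stepB n ω (i + m) = 1) ∧ stepB n ω (i + j) ≠ 1 ∧
      (i = 0 ∨ stepB n ω (i - 1) ≠ 1)).card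

/-!
Cutting `ω` at its first `-1` (at position `k`, or `k = n` if there is none) leaves a run of `k`
plus signs followed by an arbitrary sign sequence of length `n - 1 - k`. Hence `B n = 2 ^ n * a n`
satisfies the renewal equation `B n = f n + ∑ k < n, f k * B (n - 1 - k)`, where `f k = z k` for
`1 ≤ k ≤ J` and `f k = 1` otherwise. For `q = w_c / 2`, the equation `φ_J(w_c) = 0` says exactly
that `∑ k, f k * q ^ (k + 1) = 1`, so `v n = B n * q ^ n` is a renewal sequence for a probability
kernel, whose source term is a fixed multiple of the kernel mass not yet seen; a strong induction
traps `v n` between two positive constants. Thus `a n * w_c ^ n` is bounded above and below and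
`a n ^ (1 / n) → 1 / w_c`. That `w_c < 2` comes from `φ_J(w) → -∞` as `w → 2⁻`.
-/

open Finset Filter Topology

section RunDecomposition

abbrev IsRunStart (s : ℕ → ℤ) (j i : ℕ) : Prop :=
  (∀ m < j, s (i + m) = 1) ∧ s (i + j) ≠ 1 ∧ (i = 0 ∨ s (i - 1) ≠ 1)

theorem upBlocks_eq_card (n : ℕ) (ω : Fin n → Bool) (j : ℕ) :
    upBlocks n ω j = #{i ∈ range n | IsRunStart (stepB n ω) j i} := rfl

theorem isRunStart_iff_of_le {s : ℕ → ℤ} {j k i : ℕ} (hpre : ∀ p < k, s p = 1) (hk : s k ≠ 1)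
    (hi : i ≤ k) : IsRunStart s j i ↔ i = 0 ∧ j = k := by
  constructor
  · rintro ⟨hrun, hend, hstart⟩
    have hi0 : i = 0 := by
      by_contra hi0
      exact hstart.resolve_left hi0 (hpre _ (by omega))
    subst hi0
    refine ⟨rfl, le_antisymm ?_ ?_⟩
    · by_contra! hkj
      exact hk (by simpa using hrun k hkj)
    · by_contra! hjk
      exact hend (by simpa using hpre j hjk)
  · rintro ⟨rfl, rfl⟩
    exact ⟨fun m hm => by simpa using hpre m hm, by simpa using hk, Or.inl rfl⟩

theorem isRunStart_add_iff {s : ℕ → ℤ} {j k : ℕ} (hk : s k ≠ 1) (i : ℕ) :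
    IsRunStart s j (k + 1 + i) ↔ IsRunStart (fun p => s (k + 1 + p)) j i := by
  simp only [IsRunStart, add_assoc]
  refine and_congr Iff.rfl (and_congr Iff.rfl ?_)
  rcases Nat.eq_zero_or_pos i with rfl | hi
  · simpa using hk
  · have : k + (1 + i) - 1 = k + (1 + (i - 1)) := by omega
    simp [this, hi.ne']

def dropSigns {n : ℕ} (k : ℕ) (ω : Fin n → Bool) : Fin (n - 1 - k) → Bool :=
  fun i => ω ⟨k + 1 + i, by omega⟩

theorem stepB_dropSigns {n : ℕ} (k : ℕ) (ω : Fin n → Bool) (p : ℕ) :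
    stepB (n - 1 - k) (dropSigns k ω) p = stepB n ω (k + 1 + p) := by
  unfold stepB dropSigns
  by_cases h : p < n - 1 - k
  · rw [dif_pos h, dif_pos (by omega)]
  · rw [dif_neg h, dif_neg (by omega)]

theorem upBlocks_eq_add_upBlocks_dropSigns {n k j : ℕ} {ω : Fin n → Bool}
    (hpre : ∀ p < k, stepB n ω p = 1) (hk : stepB n ω k ≠ 1) (hj : 1 ≤ j) :
    upBlocks n ω j = (if j = k then 1 else 0) + upBlocks (n - 1 - k) (dropSigns k ω) j := by
  have hkn : k ≤ n := by
    by_contra! h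
    simpa [stepB] using hpre n h
  have hhead : ∀ i ≤ k, IsRunStart (stepB n ω) j i ↔ i = 0 ∧ j = k :=
    fun i => isRunStart_iff_of_le hpre hk
  simp only [upBlocks_eq_card, card_filter]
  rcases hkn.lt_or_eq with hlt | rfl
  · rw [show range n = range (k + 1 + (n - 1 - k)) by congr 1; omega, sum_range_add]
    congr 1
    · rw [sum_congr rfl fun i hi =>
        if_congr (hhead i (Nat.lt_succ_iff.mp (mem_range.mp hi))) rfl rfl]
      split_ifs with hjk <;> simp [hjk]
    · refine sum_congr rfl fun i _ => if_congr ?_ rfl rfl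
      rw [isRunStart_add_iff hk, ← funext (stepB_dropSigns k ω)]
  · rw [sum_congr rfl fun i hi => if_congr (hhead i (mem_range.mp hi).le) rfl rfl]
    by_cases hjk : j = k
    · subst hjk
      simp [show 0 < j by omega]
    · simp [hjk]

theorem stepB_eq_one_iff {n : ℕ} {ω : Fin n → Bool} {p : ℕ} :
    stepB n ω p = 1 ↔ ∃ h : p < n, ω ⟨p, h⟩ = true := by
  by_cases h : p < n
  · cases hω : ω ⟨p, h⟩ <;> simp [stepB, h, hω]
  · simp [stepB, h]

theorem exists_stepB_ne_one (n : ℕ) (ω : Fin n → Bool) : ∃ p, stepB n ω p ≠ 1 :=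
  ⟨n, by simp [stepB]⟩

-- `stepB` vanishes from `n` on, so `firstFalse n ω = n` when `ω` has no `-1`.
def firstFalse (n : ℕ) (ω : Fin n → Bool) : ℕ := Nat.find (exists_stepB_ne_one n ω)

theorem firstFalse_eq_iff {n k : ℕ} {ω : Fin n → Bool} :
    firstFalse n ω = k ↔ (∀ p < k, stepB n ω p = 1) ∧ stepB n ω k ≠ 1 := by
  rw [firstFalse, Nat.find_eq_iff, and_comm]
  simp only [not_not]

theorem firstFalse_le (n : ℕ) (ω : Fin n → Bool) : firstFalse n ω ≤ n :=
  Nat.find_le (by simp [stepB])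

def prependRun {n : ℕ} (k : ℕ) (ω' : Fin (n - 1 - k) → Bool) : Fin n → Bool :=
  fun p => if h : k + 1 ≤ p then ω' ⟨p - (k + 1), by omega⟩ else decide (p < k)

theorem dropSigns_prependRun {n : ℕ} (k : ℕ) (ω' : Fin (n - 1 - k) → Bool) :
    dropSigns k (prependRun k ω') = ω' := by
  funext i
  simp [dropSigns, prependRun]

theorem firstFalse_prependRun {n k : ℕ} (hk : k ≤ n) (ω' : Fin (n - 1 - k) → Bool) :
    firstFalse n (prependRun k ω') = k := by
  simp only [firstFalse_eq_iff, ne_eq, stepB_eq_one_iff]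
  refine ⟨fun p hp => ⟨by omega, by simp [prependRun, hp, show ¬k + 1 ≤ p by omega]⟩, ?_⟩
  rintro ⟨hkn, h⟩
  simp [prependRun] at h

theorem prependRun_dropSigns {n k : ℕ} {ω : Fin n → Bool} (h : firstFalse n ω = k) :
    prependRun k (dropSigns k ω) = ω := by
  obtain ⟨hpre, hk⟩ := firstFalse_eq_iff.mp h
  funext p
  unfold prependRun dropSigns
  split_ifs with hp
  · congr 1
    ext
    simp only
    omega
  · rcases Nat.lt_or_ge p k with hpk | hpk
    · obtain ⟨_, hω⟩ := stepB_eq_one_iff.mp (hpre p hpk)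
      simp [hpk, hω]
    · have hpk : (p : ℕ) = k := by omega
      have hfalse : ω p ≠ true := fun hω =>
        hk (stepB_eq_one_iff.mpr ⟨hpk ▸ p.isLt, by simp [← hpk, hω]⟩)
      simpa [hpk] using hfalse

theorem sum_firstFalse_eq {M : Type*} [AddCommMonoid M] {n k : ℕ} (hk : k ≤ n)
    (g : (Fin (n - 1 - k) → Bool) → M) :
    ∑ ω with firstFalse n ω = k, g (dropSigns k ω) = ∑ ω', g ω' :=
  sum_nbij' (dropSigns k) (prependRun k) (fun _ _ => mem_univ _)
    (fun ω' _ => mem_filter.mpr ⟨mem_univ _, firstFalse_prependRun hk ω'⟩)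
    (fun _ hω => prependRun_dropSigns (mem_filter.mp hω).2)
    (fun ω' _ => dropSigns_prependRun k ω') (fun _ _ => rfl)

end RunDecomposition

section WeightedCount

variable {R : Type*} [CommSemiring R] (S : Finset ℕ) (z : ℕ → R)

def runWeight (k : ℕ) : R := if k ∈ S then z k else 1

def weightedCount (n : ℕ) : R := ∑ ω : Fin n → Bool, ∏ j ∈ S, z j ^ upBlocks n ω j

theorem weightedCount_zero : weightedCount S z 0 = 1 := by
  simp [weightedCount, upBlocks]

variable {S}

theorem prod_pow_upBlocks_of_firstFalse_eq (hS : 0 ∉ S) {n k : ℕ} {ω : Fin n → Bool}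
    (h : firstFalse n ω = k) :
    ∏ j ∈ S, z j ^ upBlocks n ω j
      = runWeight S z k * ∏ j ∈ S, z j ^ upBlocks (n - 1 - k) (dropSigns k ω) j := by
  obtain ⟨hpre, hk⟩ := firstFalse_eq_iff.mp h
  have hsplit : ∀ j ∈ S, z j ^ upBlocks n ω j
      = (if j = k then z j else 1) * z j ^ upBlocks (n - 1 - k) (dropSigns k ω) j := by
    intro j hj
    rw [upBlocks_eq_add_upBlocks_dropSigns hpre hk
      (Nat.one_le_iff_ne_zero.mpr (ne_of_mem_of_not_mem hj hS)), pow_add, pow_ite, pow_one,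
      pow_zero]
  rw [prod_congr rfl hsplit, prod_mul_distrib, prod_ite_eq' S k z, runWeight]

theorem weightedCount_eq (hS : 0 ∉ S) (n : ℕ) :
    weightedCount S z n
      = runWeight S z n + ∑ k ∈ range n, runWeight S z k * weightedCount S z (n - 1 - k) := by
  have hfiber : ∀ k ≤ n, ∑ ω with firstFalse n ω = k, ∏ j ∈ S, z j ^ upBlocks n ω j
      = runWeight S z k * weightedCount S z (n - 1 - k) := fun k hk => by
    rw [sum_congr rfl fun ω hω => prod_pow_upBlocks_of_firstFalse_eq z hS (mem_filter.mp hω).2,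
      ← mul_sum, sum_firstFalse_eq hk fun ω' => ∏ j ∈ S, z j ^ upBlocks (n - 1 - k) ω' j,
      weightedCount]
  rw [weightedCount, ← sum_fiberwise_of_maps_to (g := firstFalse n) (t := range (n + 1))
    fun ω _ => mem_range.mpr (Nat.lt_succ_of_le (firstFalse_le n ω)), sum_range_succ, add_comm,
    hfiber n le_rfl, show n - 1 - n = 0 by omega, weightedCount_zero, mul_one]
  exact congrArg _ (sum_congr rfl fun k hk => hfiber k (mem_range.mp hk).le)

variable {z}

theorem weightedCount_pos [PartialOrder R] [IsStrictOrderedRing R] (hz : ∀ j ∈ S, 0 < z j) (n : ℕ) : 0 < weightedCount S z n :=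
  sum_pos (fun _ _ => prod_pos fun j hj => pow_pos (hz j hj) _) univ_nonempty

theorem runWeight_nonneg [PartialOrder R] [IsOrderedRing R] (hz : ∀ j ∈ S, 0 ≤ z j) (k : ℕ) : 0 ≤ runWeight S z k := by
  unfold runWeight
  split_ifs with hk
  exacts [hz k hk, zero_le_one]

end WeightedCount

section Renewal

theorem renewal_mul_pow {R : Type*} [CommSemiring R] {f B : ℕ → R}
    (hB : ∀ n, B n = f n + ∑ k ∈ range n, f k * B (n - 1 - k)) (q : R) (n : ℕ) :
    B n * q ^ n
      = f n * q ^ n + ∑ k ∈ range n, f k * q ^ (k + 1) * (B (n - 1 - k) * q ^ (n - 1 - k)) := by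
  rw [hB n, add_mul, sum_mul]
  refine congrArg _ (sum_congr rfl fun k hk => ?_)
  have hsplit : q ^ n = q ^ (k + 1) * q ^ (n - 1 - k) := by
    rw [← pow_add]
    congr 1
    have := mem_range.mp hk
    omega
  rw [hsplit]
  ring

variable {g h v : ℕ → ℝ} {N : ℕ}

theorem le_of_renewal {C : ℝ} (hg : ∀ k, 0 ≤ g k)
    (hv : ∀ n, v n = h n + ∑ k ∈ range n, g k * v (n - 1 - k)) (hinit : ∀ n ≤ N, v n ≤ C)
    (hh : ∀ n, N < n → h n ≤ C * (1 - ∑ k ∈ range n, g k)) (n : ℕ) : v n ≤ C := by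
  induction n using Nat.strong_induction_on with
  | _ n ih =>
    rcases le_or_gt n N with hn | hn
    · exact hinit n hn
    calc v n = h n + ∑ k ∈ range n, g k * v (n - 1 - k) := hv n
      _ ≤ C * (1 - ∑ k ∈ range n, g k) + ∑ k ∈ range n, g k * C :=
          add_le_add (hh n hn) (sum_le_sum fun k hk =>
            mul_le_mul_of_nonneg_left (ih _ (by have := mem_range.mp hk; omega)) (hg k))
      _ = C := by rw [← sum_mul]; ring

theorem ge_of_renewal {c : ℝ} (hg : ∀ k, 0 ≤ g k)
    (hv : ∀ n, v n = h n + ∑ k ∈ range n, g k * v (n - 1 - k)) (hinit : ∀ n ≤ N, c ≤ v n)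
    (hh : ∀ n, N < n → c * (1 - ∑ k ∈ range n, g k) ≤ h n) (n : ℕ) : c ≤ v n := by
  have hneg := le_of_renewal (v := fun n => -v n) (h := fun n => -h n) (C := -c) hg
    (fun n => by simp only [hv n, mul_neg, sum_neg_distrib, neg_add])
    (fun n hn => neg_le_neg (hinit n hn))
    (fun n hn => by linarith [hh n hn]) n
  exact neg_le_neg_iff.mp hneg

theorem sum_range_mul_pow_eq {f : ℕ → ℝ} {q : ℝ} (hq : q ≠ 1) (hf : ∀ n, N < n → f n = 1)
    (hroot : ∑ k ∈ range (N + 1), f k * q ^ (k + 1) + q ^ (N + 2) / (1 - q) = 1) {n : ℕ}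
    (hn : N < n) : ∑ k ∈ range n, f k * q ^ (k + 1) = 1 - q ^ (n + 1) / (1 - q) := by
  induction n, hn using Nat.le_induction with
  | base =>
    show ∑ k ∈ range (N + 1), f k * q ^ (k + 1) = 1 - q ^ (N + 2) / (1 - q)
    linarith
  | succ n hn ih =>
    have hq' : 1 - q ≠ 0 := sub_ne_zero.mpr hq.symm
    rw [sum_range_succ, ih, hf n hn]
    field_simp
    ring

theorem exists_bounds_mul_pow_of_renewal {f B : ℕ → ℝ} {q : ℝ} (hq0 : 0 < q) (hq1 : q < 1)
    (hf0 : ∀ k, 0 ≤ f k) (hf1 : ∀ n, N < n → f n = 1)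
    (hroot : ∑ k ∈ range (N + 1), f k * q ^ (k + 1) + q ^ (N + 2) / (1 - q) = 1)
    (hB : ∀ n, B n = f n + ∑ k ∈ range n, f k * B (n - 1 - k)) (hBpos : ∀ n ≤ N, 0 < B n) :
    ∃ c C, 0 < c ∧ ∀ n, c ≤ B n * q ^ n ∧ B n * q ^ n ≤ C := by
  set ρ := (1 - q) / q with hρ_def
  have hg : ∀ k, 0 ≤ f k * q ^ (k + 1) := fun k => mul_nonneg (hf0 k) (pow_nonneg hq0.le _)
  -- Beyond `N` the source term is `ρ` times the kernel mass not yet seen.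
  have hsource : ∀ n, N < n → f n * q ^ n = ρ * (1 - ∑ k ∈ range n, f k * q ^ (k + 1)) ∧
      0 ≤ 1 - ∑ k ∈ range n, f k * q ^ (k + 1) := by
    intro n hn
    have hq' : 1 - q ≠ 0 := by linarith
    rw [sum_range_mul_pow_eq hq1.ne hf1 hroot hn, hf1 n hn, sub_sub_cancel]
    refine ⟨by rw [hρ_def]; field_simp; ring, div_nonneg (pow_nonneg hq0.le _) (by linarith)⟩
  obtain ⟨m, hm, hmin⟩ :=
    (range (N + 1)).exists_min_image (fun n => B n * q ^ n) ⟨0, by simp⟩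
  obtain ⟨M, -, hmax⟩ :=
    (range (N + 1)).exists_max_image (fun n => B n * q ^ n) ⟨0, by simp⟩
  have hρ : 0 < ρ := div_pos (by linarith) hq0
  refine ⟨min (B m * q ^ m) ρ, max (B M * q ^ M) ρ,
    lt_min (mul_pos (hBpos m (Nat.lt_succ_iff.mp (mem_range.mp hm))) (pow_pos hq0 m)) hρ,
    fun n => ⟨ge_of_renewal (N := N) hg (renewal_mul_pow hB q) ?_ ?_ n,
      le_of_renewal (N := N) hg (renewal_mul_pow hB q) ?_ ?_ n⟩⟩
  · exact fun n hn => (min_le_left _ _).trans (hmin n (mem_range.mpr (Nat.lt_succ_of_le hn)))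
  · intro n hn
    rw [(hsource n hn).1]
    exact mul_le_mul_of_nonneg_right (min_le_right _ _) (hsource n hn).2
  · exact fun n hn => (hmax n (mem_range.mpr (Nat.lt_succ_of_le hn))).trans (le_max_left _ _)
  · intro n hn
    rw [(hsource n hn).1]
    exact mul_le_mul_of_nonneg_right (le_max_right _ _) (hsource n hn).2

end Renewal

theorem tendsto_rpow_inv_of_bounds {a : ℕ → ℝ} {w c C : ℝ} (hw : 0 < w) (hc : 0 < c)
    (hbound : ∀ n, c ≤ a n * w ^ n ∧ a n * w ^ n ≤ C) :
    Tendsto (fun n : ℕ => a n ^ (n : ℝ)⁻¹) atTop (𝓝 (1 / w)) := by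
  have hinv : Tendsto (fun n : ℕ => (n : ℝ)⁻¹) atTop (𝓝 0) :=
    tendsto_inv_atTop_zero.comp tendsto_natCast_atTop_atTop
  have hroot : ∀ {d : ℝ}, 0 < d →
      Tendsto (fun n : ℕ => d ^ (n : ℝ)⁻¹ / w) atTop (𝓝 (1 / w)) := fun hd => by
    simpa using (tendsto_const_nhds.rpow hinv (Or.inl hd.ne')).div_const w
  have hsplit : ∀ n : ℕ, n ≠ 0 → a n ^ (n : ℝ)⁻¹ = (a n * w ^ n) ^ (n : ℝ)⁻¹ / w :=
    fun n hn => by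
      rw [Real.mul_rpow (by nlinarith [hbound n, pow_pos hw n]) (by positivity),
        Real.pow_rpow_inv_natCast hw.le hn, mul_div_cancel_right₀ _ hw.ne']
  refine tendsto_of_tendsto_of_tendsto_of_le_of_le' (hroot hc)
    (hroot (hc.trans_le ((hbound 0).1.trans (hbound 0).2))) ?_ ?_ <;>
  filter_upwards [eventually_ne_atTop 0] with n hn <;> rw [hsplit n hn] <;>
  gcongr
  exacts [(hbound n).1, hc.le.trans (hbound n).1, (hbound n).2]

noncomputable def phiJ (J : ℕ) (z : ℕ → ℝ) (w : ℝ) : ℝ :=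
  1 - w / 2 * (1 + ∑ j ∈ Icc 1 J, (w / 2) ^ j * z j + (w / 2) ^ (J + 1) / (1 - w / 2))

theorem one_sub_phiJ (J : ℕ) (z : ℕ → ℝ) (u : ℝ) :
    1 - phiJ J z (2 * u)
      = ∑ k ∈ range (J + 1), runWeight (Icc 1 J) z k * u ^ (k + 1) + u ^ (J + 2) / (1 - u) := by
  have hrange : range (J + 1) = insert 0 (Icc 1 J) := by
    ext k
    simp only [mem_range, mem_insert, mem_Icc]
    omega
  rw [hrange, sum_insert (by simp), runWeight, if_neg (by simp),
    sum_congr rfl fun k hk => by rw [runWeight, if_pos hk], phiJ,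
    mul_div_cancel_left₀ u two_ne_zero]
  have hshift : ∑ k ∈ Icc 1 J, z k * u ^ (k + 1) = u * ∑ j ∈ Icc 1 J, u ^ j * z j := by
    rw [mul_sum]
    exact sum_congr rfl fun k _ => by ring
  rw [hshift]
  ring

theorem exists_one_sub_le_pow (m : ℕ) : ∃ u ∈ Set.Ioo (0 : ℝ) 1, 1 - u ≤ u ^ m := by
  have hlim : Tendsto (fun u : ℝ => u ^ m - (1 - u)) (𝓝[<] 1) (𝓝 1) := by
    have := (by fun_prop : Continuous fun u : ℝ => u ^ m - (1 - u)).tendsto 1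
    simpa using this.mono_left nhdsWithin_le_nhds
  have hnear : ∀ᶠ u in 𝓝[<] 1, u ∈ Set.Ioo (0 : ℝ) 1 := Ioo_mem_nhdsLT one_pos
  obtain ⟨u, hu, hpos⟩ := (hnear.and (hlim.eventually (lt_mem_nhds one_pos))).exists
  exact ⟨u, hu, by linarith⟩

theorem exists_phiJ_eq_zero (J : ℕ) {z : ℕ → ℝ} (hz : ∀ j ∈ Icc 1 J, 0 ≤ z j) :
    ∃ w ∈ Set.Ioo (0 : ℝ) 2, phiJ J z w = 0 := by
  obtain ⟨u, ⟨hu0, hu1⟩, hu⟩ := exists_one_sub_le_pow (J + 2)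
  have hcont : ContinuousOn (phiJ J z) (Set.Icc 0 (2 * u)) := by
    have hden : ∀ w ∈ Set.Icc 0 (2 * u), 1 - w / 2 ≠ 0 := fun w hw => by linarith [hw.2]
    unfold phiJ
    exact continuousOn_const.sub ((by fun_prop : Continuous fun w : ℝ => w / 2).continuousOn.mul
      (ContinuousOn.add (by fun_prop) (ContinuousOn.div (by fun_prop) (by fun_prop) hden)))
  have hneg : phiJ J z (2 * u) ≤ 0 := by
    have htail : 1 ≤ u ^ (J + 2) / (1 - u) := (one_le_div (by linarith)).mpr hu
    have hsum : 0 ≤ ∑ k ∈ range (J + 1), runWeight (Icc 1 J) z k * u ^ (k + 1) :=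
      sum_nonneg fun k _ => mul_nonneg (runWeight_nonneg hz k) (pow_nonneg hu0.le _)
    linarith [one_sub_phiJ J z u]
  have hzero : phiJ J z 0 = 1 := by simp [phiJ]
  obtain ⟨w, hw, hw0⟩ :=
    intermediate_value_Icc' (by linarith) hcont ⟨hneg, hzero ▸ zero_le_one⟩
  have hwpos : 0 < w := hw.1.lt_of_ne (by rintro rfl; simp [hzero] at hw0)
  exact ⟨w, ⟨hwpos, by linarith [hw.2]⟩, hw0⟩

theorem limsup_weighted_srw_eq_inv_wc_general (J : ℕ) (z : ℕ → ℝ)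
    (hz : ∀ j ∈ Finset.Icc 1 J, 0 < z j ∧ z j ≤ 1)
    (a : ℕ → ℝ)
    (ha : ∀ n, a n = (2 : ℝ) ^ (-(n : ℤ)) *
      ∑ ω : Fin n → Bool, ∏ j ∈ Finset.Icc 1 J, z j ^ upBlocks n ω j)
    (wc : ℝ)
    (hwc : IsLeast {w : ℝ | 0 < w ∧
      1 - w / 2 * (1 + ∑ j ∈ Finset.Icc 1 J, (w / 2) ^ j * z j
        + (w / 2) ^ (J + 1) / (1 - w / 2)) = 0} wc) :
    Filter.limsup (fun n : ℕ => a n ^ ((n : ℝ)⁻¹)) Filter.atTop = 1 / wc := by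
  obtain ⟨⟨hwc0, hroot⟩, hleast⟩ := hwc
  obtain ⟨w, ⟨hw0, hw2⟩, hw⟩ := exists_phiJ_eq_zero J fun j hj => (hz j hj).1.le
  have hwc2 : wc < 2 := (hleast ⟨hw0, hw⟩).trans_lt hw2
  have hkernel : ∑ k ∈ range (J + 1), runWeight (Icc 1 J) z k * (wc / 2) ^ (k + 1)
      + (wc / 2) ^ (J + 2) / (1 - wc / 2) = 1 := by
    rw [← one_sub_phiJ, mul_div_cancel₀ wc two_ne_zero, phiJ, hroot, sub_zero]
  obtain ⟨c, C, hc, hbounds⟩ := exists_bounds_mul_pow_of_renewal (by positivity) (by linarith)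
    (runWeight_nonneg fun j hj => (hz j hj).1.le) (fun n hn => if_neg (by simp only [mem_Icc]; omega)) hkernel
    (weightedCount_eq z (by simp)) (fun n _ => weightedCount_pos (fun j hj => (hz j hj).1) n)
  refine (tendsto_rpow_inv_of_bounds (C := C) hwc0 hc fun n => ?_).limsup_eq
  have hscale : a n * wc ^ n = weightedCount (Icc 1 J) z n * (wc / 2) ^ n := by
    rw [ha n, weightedCount, zpow_neg, zpow_natCast, div_pow]
    field_simp
  exact hscale ▸ hbounds n

/-- The limsup of the `n`-th roots of the simple-random-walk expectations of the
up-run weights equals `1/w_c(J)`. -/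
theorem limsup_weighted_srw_eq_inv_wc (J : ℕ) (hJ : 1 ≤ J) (z : ℕ → ℝ)
    (hz : ∀ j ∈ Finset.Icc 1 J, 0 < z j ∧ z j ≤ 1)
    (a : ℕ → ℝ)
    (ha : ∀ n, a n = (2 : ℝ) ^ (-(n : ℤ)) *
      ∑ ω : Fin n → Bool, ∏ j ∈ Finset.Icc 1 J, z j ^ upBlocks n ω j)
    (wc : ℝ)
    (hwc : IsLeast {w : ℝ | 0 < w ∧
      1 - w / 2 * (1 + ∑ j ∈ Finset.Icc 1 J, (w / 2) ^ j * z j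
        + (w / 2) ^ (J + 1) / (1 - w / 2)) = 0} wc) :
    Filter.limsup (fun n : ℕ => a n ^ ((n : ℝ)⁻¹)) Filter.atTop = 1 / wc :=
  limsup_weighted_srw_eq_inv_wc_general J z hz a ha wc hwc
end

section
/- Fix an integer J ≥ 1 and reals z_1, …, z_J ∈ (0,1]. For ω ∈ {+1,−1}^n let U_j(ω) be the number of maximal blocks of consecutive +1's in ω of length exactly j, define W^{(J)}(ω) := ∏_{j=1}^J z_j^{U_j(ω)} (blocks of length greater than J contribute the factor 1), and let a_n := 2^{−n} ∑_{ω ∈ {+1,−1}^n} W^{(J)}(ω) with a_0 := 1. Let w_c(J) be the smallest positive root of φ_J(w) := 1 − (w/2)(1 + Z(w)) where Z(w) := ∑_{j=1}^J (w/2)^j z_j + (w/2)^{J+1}/(1 − w/2). Then for every real w with 0 ≤ w < w_c(J), the series ∑_{n≥0} w^n a_n converges and ∑_{n≥0} w^n a_n = (1 + Z(w)) / (1 − (w/2)(1 + Z(w))). -/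
/-!
Write `ζ k` for the weight of a maximal run of `k` pluses (`z k` if `1 ≤ k ≤ J`, else `1`) and
`b n = 2 ^ n * a n` for the total weight of the sign sequences of length `n`. Peeling off the
leading run of `+1`'s together with the `-1` that ends it gives the renewal equation
`b (n + 1) = ζ (n + 1) + ∑_{k ≤ n} ζ k * b (n - k)`. With `x = w / 2` the series
`F = ∑ x ^ n * ζ n` sums to `1 + Z w`, so the generating function `B` of the `x ^ n * b n`
satisfies `B = F + x * F * B`. For nonnegative coefficients the same identity bounds the partial
sums of `B` by `F / (1 - x * F)` as long as `x * F < 1`, and this holds for `0 ≤ w < w_c`: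
`φ` is continuous on `[0, 2)`, equals `1` at `0` and becomes negative near `2`.
-/

open Finset Filter Topology

section Runs

variable (u : ℕ → Prop) [DecidablePred u]

-- `upBlocks n ω j` is definitionally `runCount (stepB n ω · = 1) n j`.
def runCount (N j : ℕ) : ℕ :=
  ((range N).filter fun i => (∀ m < j, u (i + m)) ∧ ¬ u (i + j) ∧ (i = 0 ∨ ¬ u (i - 1))).card

variable {u}

lemma runCount_congr {v : ℕ → Prop} [DecidablePred v] (h : ∀ p, u p ↔ v p) (N j : ℕ) :
    runCount u N j = runCount v N j := by
  simp only [runCount, h]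

lemma runCount_lt_self (N : ℕ) {j : ℕ} (hj : 1 ≤ j) :
    runCount (· < N) N j = if N = j then 1 else 0 := by
  rw [runCount, card_filter]
  rcases Nat.eq_zero_or_pos N with rfl | hN
  · simp only [range_zero, sum_empty, if_neg (show 0 ≠ j by omega)]
  rw [sum_eq_single_of_mem 0 (mem_range.mpr hN)]
  · by_cases hjN : j = N
    · simp [hjN]
    · rw [if_neg, if_neg (Ne.symm hjN)]
      rintro ⟨hall, hne, -⟩
      rcases lt_or_gt_of_ne hjN with h | h
      · omega
      · exact absurd (hall N h) (by omega)
  · intro i hi hi0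
    rw [if_neg]
    rintro ⟨-, -, h0 | h⟩
    · exact hi0 h0
    · exact h (by simp only [mem_range] at hi; omega)

lemma runCount_of_prefix {v : ℕ → Prop} [DecidablePred v] {k N : ℕ} (hkN : k < N)
    (hpre : ∀ p < k, u p) (hk : ¬ u k) (hshift : ∀ p, u (k + 1 + p) ↔ v p) (j : ℕ) :
    runCount u N j = (if k = j then 1 else 0) + runCount v (N - (k + 1)) j := by
  rw [runCount, runCount, card_filter, card_filter, range_eq_Ico,
    ← sum_Ico_consecutive _ (Nat.zero_le (k + 1)) hkN]
  congr 1
  · rw [← range_eq_Ico, sum_eq_single_of_mem 0 (mem_range.mpr k.succ_pos)]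
    · by_cases hjk : j = k
      · subst hjk
        simp_all
      · rw [if_neg, if_neg (Ne.symm hjk)]
        rintro ⟨hall, hne, -⟩
        rcases lt_or_gt_of_ne hjk with h | h
        · exact hne (by simpa using hpre j h)
        · exact hk (by simpa using hall k h)
    · intro i hi hi0
      rw [if_neg]
      rintro ⟨-, -, h0 | h⟩
      · exact hi0 h0
      · exact h (hpre (i - 1) (by simp only [mem_range] at hi; omega))
  · rw [sum_Ico_eq_sum_range]
    refine sum_congr rfl fun i _ => if_congr ?_ rfl rfl
    have hshift' : ∀ p, u (k + 1 + i + p) ↔ v (i + p) := fun p => by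
      rw [add_assoc]; exact hshift _
    simp only [hshift']
    refine and_congr_right fun _ => and_congr_right fun _ => ?_
    rcases i with _ | i
    · simpa using hk
    · simp [show k + 1 + (i + 1) - 1 = k + 1 + i by omega, hshift]

end Runs

lemma stepB_of_le {n p : ℕ} (ω : Fin n → Bool) (h : n ≤ p) : stepB n ω p = 0 := by
  simp [stepB, not_lt.mpr h]

lemma stepB_cons_zero {n : ℕ} (b : Bool) (ω : Fin n → Bool) :
    stepB (n + 1) (Fin.cons b ω) 0 = if b then 1 else -1 := by
  simp [stepB]

lemma stepB_cons_succ {n : ℕ} (b : Bool) (ω : Fin n → Bool) (p : ℕ) :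
    stepB (n + 1) (Fin.cons b ω) (p + 1) = stepB n ω p := by
  by_cases h : p < n
  · simp [stepB, h, ← Fin.succ_mk]
  · rw [stepB_of_le _ (by omega), stepB_of_le _ (by omega)]

lemma sum_fun_fin_succ {α M : Type*} [Fintype α] [AddCommMonoid M] {n : ℕ}
    (F : (Fin (n + 1) → α) → M) : ∑ ω, F ω = ∑ a, ∑ ω : Fin n → α, F (Fin.cons a ω) := by
  rw [← (Fin.consEquiv fun _ => α).sum_comp, Fintype.sum_prod_type]
  rfl

section Weights

variable {R : Type*} [CommSemiring R] (J : ℕ) (z : ℕ → R)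

def blockWeight (k : ℕ) : R := if k ∈ Icc 1 J then z k else 1

def weightSum (n : ℕ) : R := ∑ ω : Fin n → Bool, ∏ j ∈ Icc 1 J, z j ^ upBlocks n ω j

-- the total weight of the sequences `+1^m ω` of length `m + n`
def prefixedWeightSum (m n : ℕ) : R :=
  ∑ ω : Fin n → Bool,
    ∏ j ∈ Icc 1 J, z j ^ runCount (fun p => p < m ∨ stepB n ω (p - m) = 1) (m + n) j

variable {J z}

lemma prod_pow_runCount_of_prefix {u v : ℕ → Prop} [DecidablePred u] [DecidablePred v]
    {k N : ℕ} (hkN : k < N) (hpre : ∀ p < k, u p) (hk : ¬ u k)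
    (hshift : ∀ p, u (k + 1 + p) ↔ v p) :
    ∏ j ∈ Icc 1 J, z j ^ runCount u N j
      = blockWeight J z k * ∏ j ∈ Icc 1 J, z j ^ runCount v (N - (k + 1)) j := by
  simp only [runCount_of_prefix hkN hpre hk hshift, pow_add, prod_mul_distrib, prod_pow_boole]
  rfl

lemma prefixedWeightSum_zero_left (n : ℕ) : prefixedWeightSum J z 0 n = weightSum J z n := by
  simp only [prefixedWeightSum, weightSum, Nat.not_lt_zero, false_or, Nat.sub_zero, zero_add]
  rfl

lemma prefixedWeightSum_zero_right (m : ℕ) : prefixedWeightSum J z m 0 = blockWeight J z m := by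
  rw [prefixedWeightSum, Fintype.sum_unique, add_zero, blockWeight, ← prod_pow_boole]
  refine prod_congr rfl fun j hj => congrArg (z j ^ ·) ?_
  rw [runCount_congr (v := (· < m)) (fun p => by simp [stepB_of_le]),
    runCount_lt_self m (mem_Icc.mp hj).1]

lemma weightSum_zero : weightSum J z 0 = blockWeight J z 0 := by
  rw [← prefixedWeightSum_zero_left, prefixedWeightSum_zero_right]

lemma prefixedWeightSum_succ (m n : ℕ) :
    prefixedWeightSum J z m (n + 1)
      = prefixedWeightSum J z (m + 1) n + blockWeight J z m * weightSum J z n := by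
  rw [prefixedWeightSum, sum_fun_fin_succ, Fintype.sum_bool, weightSum, mul_sum]
  congr 1
  · refine sum_congr rfl fun ω _ => ?_
    rw [show m + (n + 1) = m + 1 + n by omega]
    refine prod_congr rfl fun j _ => congrArg (z j ^ ·) (runCount_congr (fun p => ?_) _ _)
    rcases lt_trichotomy p m with hp | rfl | hp
    · simp [hp, Nat.lt_succ_of_lt hp]
    · simp [stepB_cons_zero]
    · obtain ⟨q, rfl⟩ : ∃ q, p = m + 1 + q := ⟨p - (m + 1), by omega⟩
      simp [show ¬ m + 1 + q < m + 1 by omega, show ¬ m + 1 + q < m by omega,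
        show m + 1 + q - m = q + 1 by omega, stepB_cons_succ]
  · refine sum_congr rfl fun ω _ => ?_
    rw [prod_pow_runCount_of_prefix (k := m) (v := fun p => stepB n ω p = 1) (by omega)
      (fun p hp => Or.inl hp) ?_ ?_, show m + (n + 1) - (m + 1) = n by omega]
    · rfl
    · simp [stepB_cons_zero]
    · intro p
      simp [show ¬ m + 1 + p < m by omega, show m + 1 + p - m = p + 1 by omega, stepB_cons_succ]

lemma prefixedWeightSum_eq (m n : ℕ) :
    prefixedWeightSum J z m n = blockWeight J z (m + n)
      + ∑ k ∈ range n, blockWeight J z (m + k) * weightSum J z (n - 1 - k) := by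
  induction n generalizing m with
  | zero => simp [prefixedWeightSum_zero_right]
  | succ n ih =>
    rw [prefixedWeightSum_succ, ih, sum_range_succ', add_assoc]
    simp only [add_zero, Nat.add_sub_cancel, Nat.sub_zero, Nat.sub_sub]
    ring_nf

lemma weightSum_succ (n : ℕ) :
    weightSum J z (n + 1) = blockWeight J z (n + 1)
      + ∑ k ∈ range (n + 1), blockWeight J z k * weightSum J z (n - k) := by
  rw [← prefixedWeightSum_zero_left, prefixedWeightSum_eq]
  simp only [zero_add, Nat.add_sub_cancel]

lemma blockWeight_nonneg [PartialOrder R] [IsOrderedRing R]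
    (hz : ∀ j ∈ Icc 1 J, 0 ≤ z j) (k : ℕ) : 0 ≤ blockWeight J z k := by
  unfold blockWeight
  split_ifs with hk
  exacts [hz k hk, zero_le_one]

lemma weightSum_nonneg [PartialOrder R] [IsOrderedRing R]
    (hz : ∀ j ∈ Icc 1 J, 0 ≤ z j) (n : ℕ) : 0 ≤ weightSum J z n :=
  sum_nonneg fun _ _ => prod_nonneg fun j hj => pow_nonneg (hz j hj) _

end Weights

section Renewal

variable {c t : ℕ → ℝ} {x G : ℝ}

lemma sum_range_sum_range_mul_le (hc : ∀ n, 0 ≤ c n) (ht : ∀ n, 0 ≤ t n) (M : ℕ) :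
    ∑ i ∈ range M, ∑ k ∈ range (i + 1), c k * t (i - k)
      ≤ (∑ k ∈ range M, c k) * ∑ l ∈ range M, t l := by
  rw [sum_range_diag_flip M fun k l => c k * t l, sum_mul_sum]
  refine sum_le_sum fun k _ => ?_
  exact sum_le_sum_of_subset_of_nonneg (range_subset_range.mpr (Nat.sub_le M k))
    fun l _ _ => mul_nonneg (hc k) (ht l)

variable (hc : ∀ n, 0 ≤ c n) (ht : ∀ n, 0 ≤ t n) (hx : 0 ≤ x) (hcG : HasSum c G)
  (hxG : x * G < 1)
  (hrec : ∀ n, t (n + 1) = c (n + 1) + x * ∑ k ∈ range (n + 1), c k * t (n - k))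
include hc ht hx hcG hxG hrec

lemma summable_of_renewal (h0 : t 0 ≤ c 0) : Summable t := by
  have hbound : ∀ N, ∑ n ∈ range N, t n ≤ G + x * G * ∑ n ∈ range N, t n := by
    have hG : 0 ≤ G := hcG.nonneg hc
    rintro (_ | M)
    · simpa using hG
    have hcM : ∑ k ∈ range M, c k ≤ G := sum_le_hasSum _ (fun k _ => hc k) hcG
    have hcM' : c 0 + ∑ i ∈ range M, c (i + 1) ≤ G := by
      rw [add_comm, ← sum_range_succ']; exact sum_le_hasSum _ (fun k _ => hc k) hcG
    have htM : ∑ l ∈ range M, t l ≤ ∑ l ∈ range (M + 1), t l :=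
      sum_le_sum_of_subset_of_nonneg (range_subset_range.mpr M.le_succ) fun l _ _ => ht l
    calc ∑ n ∈ range (M + 1), t n
        = t 0 + ∑ i ∈ range M, c (i + 1)
            + x * ∑ i ∈ range M, ∑ k ∈ range (i + 1), c k * t (i - k) := by
          rw [sum_range_succ', add_comm, mul_sum, add_assoc, ← sum_add_distrib]
          simp only [hrec]
      _ ≤ c 0 + ∑ i ∈ range M, c (i + 1)
            + x * ((∑ k ∈ range M, c k) * ∑ l ∈ range M, t l) := by
          gcongr
          exact sum_range_sum_range_mul_le hc ht M
      _ ≤ G + x * G * ∑ n ∈ range (M + 1), t n := by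
          rw [mul_assoc]
          gcongr
          exact sum_nonneg fun l _ => ht l
  refine summable_of_sum_range_le (c := G / (1 - x * G)) ht fun N => ?_
  rw [le_div_iff₀ (by linarith)]
  linarith [hbound N]

lemma hasSum_of_renewal (h0 : t 0 = c 0) : HasSum t (G / (1 - x * G)) := by
  have hts := summable_of_renewal hc ht hx hcG hxG hrec h0.le
  set T := ∑' n, t n
  have hconv : HasSum (fun n => ∑ k ∈ range (n + 1), c k * t (n - k)) (G * T) := by
    have h := hasSum_sum_range_mul_of_summable_norm hcG.summable.norm hts.norm
    rwa [hcG.tsum_eq] at h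
  have hshift : HasSum (fun n => t (n + 1)) (G - c 0 + x * (G * T)) := by
    have h := ((hasSum_nat_add_iff' 1).mpr hcG).add (hconv.mul_left x)
    rw [sum_range_one] at h
    exact h.congr_fun fun n => hrec n
  have hT : T - t 0 = G - c 0 + x * (G * T) := by
    have h := (hasSum_nat_add_iff' 1).mpr hts.hasSum
    rw [sum_range_one] at h
    exact h.unique hshift
  convert hts.hasSum using 1
  rw [div_eq_iff (by linarith)]
  linear_combination -h0 - hT

end Renewal

lemma hasSum_pow_mul_of_renewal {f b : ℕ → ℝ} {x G : ℝ} (hf : ∀ n, 0 ≤ f n) (hb : ∀ n, 0 ≤ b n)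
    (hx : 0 ≤ x) (hG : HasSum (fun n => x ^ n * f n) G) (hxG : x * G < 1) (h0 : b 0 = f 0)
    (hrec : ∀ n, b (n + 1) = f (n + 1) + ∑ k ∈ range (n + 1), f k * b (n - k)) :
    HasSum (fun n => x ^ n * b n) (G / (1 - x * G)) := by
  refine hasSum_of_renewal (fun n => mul_nonneg (pow_nonneg hx n) (hf n))
    (fun n => mul_nonneg (pow_nonneg hx n) (hb n)) hx hG hxG (fun n => ?_) (by simp [h0])
  rw [hrec, mul_add, mul_sum, mul_sum]
  congr 1
  refine sum_congr rfl fun k hk => ?_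
  rw [show n + 1 = k + (n - k) + 1 by have := mem_range.mp hk; omega, pow_succ, pow_add]
  ring

section GeneratingFunction

variable {J : ℕ}

noncomputable def blockWeightGF (J : ℕ) (z : ℕ → ℝ) (x : ℝ) : ℝ :=
  1 + ∑ j ∈ Icc 1 J, x ^ j * z j + x ^ (J + 1) / (1 - x)

lemma hasSum_pow_mul_blockWeight (z : ℕ → ℝ) {x : ℝ} (hx : |x| < 1) :
    HasSum (fun n => x ^ n * blockWeight J z n) (blockWeightGF J z x) := by
  refine (hasSum_nat_add_iff' (J + 1)).mp ?_
  have htail : (fun n => x ^ (n + (J + 1)) * blockWeight J z (n + (J + 1)))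
      = fun n => x ^ (J + 1) * x ^ n := by
    funext n
    rw [blockWeight, if_neg (by simp; omega), pow_add]
    ring
  have hhead : ∑ i ∈ range (J + 1), x ^ i * blockWeight J z i
      = 1 + ∑ j ∈ Icc 1 J, x ^ j * z j := by
    rw [sum_range_succ', ← Ico_add_one_right_eq_Icc, sum_Ico_eq_sum_range, add_comm]
    refine congrArg₂ _ (by simp [blockWeight]) (sum_congr rfl fun i hi => ?_)
    rw [blockWeight, if_pos (by simp at hi ⊢; omega), add_comm 1]
  rw [htail, hhead, blockWeightGF, add_sub_cancel_left, div_eq_mul_inv]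
  exact (hasSum_geometric_of_abs_lt_one hx).mul_left _

lemma continuousOn_blockWeightGF (z : ℕ → ℝ) : ContinuousOn (blockWeightGF J z) (Set.Iio 1) :=
  (by fun_prop : Continuous fun x => 1 + ∑ j ∈ Icc 1 J, x ^ j * z j).continuousOn.add
    (.div (by fun_prop) (by fun_prop) fun x hx => (sub_pos.mpr hx).ne')

lemma exists_one_lt_mul_blockWeightGF {z : ℕ → ℝ} (hz : ∀ j ∈ Icc 1 J, 0 ≤ z j) :
    ∃ x, 0 < x ∧ x < 1 ∧ 1 < x * blockWeightGF J z x := by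
  have hnear : ∀ᶠ x in 𝓝 (1 : ℝ), 0 < x ^ (J + 2) - (1 - x) :=
    continuousAt_const.eventually_lt (by fun_prop) (by norm_num)
  obtain ⟨x, hx, hx0, hx1⟩ := ((hnear.filter_mono nhdsWithin_le_nhds).and
    (Ioo_mem_nhdsLT zero_lt_one)).exists
  refine ⟨x, hx0, hx1, ?_⟩
  have hS : 0 ≤ ∑ j ∈ Icc 1 J, x ^ j * z j :=
    sum_nonneg fun j hj => mul_nonneg (pow_nonneg hx0.le j) (hz j hj)
  calc 1 < x ^ (J + 2) / (1 - x) := by rw [lt_div_iff₀ (by linarith)]; linarith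
    _ = x * (x ^ (J + 1) / (1 - x)) := by ring
    _ ≤ x * blockWeightGF J z x := by rw [blockWeightGF]; gcongr; linarith

end GeneratingFunction

lemma le_of_isLeast_pos_zero {φ : ℝ → ℝ} {wc b : ℝ} (hwc : IsLeast {w | 0 < w ∧ φ w = 0} wc)
    (hb : 0 ≤ b) (hφ : ContinuousOn φ (Set.Icc 0 b)) (h0 : 0 < φ 0) (hφb : φ b ≤ 0) : wc ≤ b := by
  obtain ⟨r, hr, hr0⟩ := intermediate_value_Icc' hb hφ ⟨hφb, h0.le⟩
  have hr_pos : 0 < r := hr.1.lt_of_ne fun h => by rw [← h] at hr0; linarith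
  exact (hwc.2 ⟨hr_pos, hr0⟩).trans hr.2

lemma half_lt_one_and_mul_blockWeightGF_lt_one {J : ℕ} {z : ℕ → ℝ}
    (hz : ∀ j ∈ Icc 1 J, 0 ≤ z j) {wc w : ℝ}
    (hwc : IsLeast {w | 0 < w ∧ 1 - w / 2 * blockWeightGF J z (w / 2) = 0} wc)
    (hw0 : 0 ≤ w) (hw : w < wc) : w / 2 < 1 ∧ w / 2 * blockWeightGF J z (w / 2) < 1 := by
  have hφ0 : 0 < 1 - 0 / 2 * blockWeightGF J z (0 / 2) := by norm_num [blockWeightGF]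
  have hφ_cont (b : ℝ) (hb : b < 2) :
      ContinuousOn (fun v => 1 - v / 2 * blockWeightGF J z (v / 2)) (Set.Icc 0 b) :=
    continuousOn_const.sub ((continuousOn_id.div_const 2).mul
      ((continuousOn_blockWeightGF z).comp (continuousOn_id.div_const 2)
        fun v hv => by simp only [Set.mem_Iio]; linarith [hv.2]))
  have hwc_lt : wc < 2 := by
    obtain ⟨x, hx0, hx1, hx⟩ := exists_one_lt_mul_blockWeightGF hz
    have := le_of_isLeast_pos_zero hwc (b := 2 * x) (by linarith) (hφ_cont _ (by linarith))
      hφ0 (by rw [mul_div_cancel_left₀ x two_ne_zero]; linarith)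
    linarith
  refine ⟨by linarith, lt_of_not_ge fun h => ?_⟩
  linarith [le_of_isLeast_pos_zero hwc hw0 (hφ_cont w (by linarith)) hφ0 (by linarith)]

theorem generating_function_of_weighted_srw_general (J : ℕ) (z : ℕ → ℝ)
    (hz : ∀ j ∈ Finset.Icc 1 J, 0 < z j ∧ z j ≤ 1)
    (a : ℕ → ℝ)
    (ha : ∀ n, a n = (2 : ℝ) ^ (-(n : ℤ)) *
      ∑ ω : Fin n → Bool, ∏ j ∈ Finset.Icc 1 J, z j ^ upBlocks n ω j)
    (Z : ℝ → ℝ)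
    (hZ : ∀ w, Z w = ∑ j ∈ Finset.Icc 1 J, (w / 2) ^ j * z j
      + (w / 2) ^ (J + 1) / (1 - w / 2))
    (wc : ℝ)
    (hwc : IsLeast {w : ℝ | 0 < w ∧ 1 - w / 2 * (1 + Z w) = 0} wc) :
    ∀ w : ℝ, 0 ≤ w → w < wc →
      HasSum (fun n : ℕ => w ^ n * a n) ((1 + Z w) / (1 - w / 2 * (1 + Z w))) := by
  intro w hw0 hw
  have hz0 : ∀ j ∈ Icc 1 J, 0 ≤ z j := fun j hj => (hz j hj).1.le
  have hZ' : ∀ v, 1 + Z v = blockWeightGF J z (v / 2) := fun v => by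
    rw [hZ, blockWeightGF, add_assoc]
  simp only [hZ'] at hwc ⊢
  obtain ⟨hw1, hwG⟩ := half_lt_one_and_mul_blockWeightGF_lt_one hz0 hwc hw0 hw
  have ha' : (fun n => w ^ n * a n) = fun n => (w / 2) ^ n * weightSum J z n := by
    funext n
    rw [ha, weightSum, zpow_neg, zpow_natCast, div_pow]
    field_simp
  rw [ha']
  exact hasSum_pow_mul_of_renewal (blockWeight_nonneg hz0) (weightSum_nonneg hz0)
    (by positivity) (hasSum_pow_mul_blockWeight z (abs_lt.mpr ⟨by linarith, hw1⟩)) hwG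
    weightSum_zero weightSum_succ

/-- The generating function of the simple-random-walk expectations of the up-run
weights: for `0 ≤ w < w_c(J)` the series converges to `(1+Z(w))/(1-(w/2)(1+Z(w)))`. -/
theorem generating_function_of_weighted_srw (J : ℕ) (hJ : 1 ≤ J) (z : ℕ → ℝ)
    (hz : ∀ j ∈ Finset.Icc 1 J, 0 < z j ∧ z j ≤ 1)
    (a : ℕ → ℝ)
    (ha : ∀ n, a n = (2 : ℝ) ^ (-(n : ℤ)) *
      ∑ ω : Fin n → Bool, ∏ j ∈ Finset.Icc 1 J, z j ^ upBlocks n ω j)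
    (Z : ℝ → ℝ)
    (hZ : ∀ w, Z w = ∑ j ∈ Finset.Icc 1 J, (w / 2) ^ j * z j
      + (w / 2) ^ (J + 1) / (1 - w / 2))
    (wc : ℝ)
    (hwc : IsLeast {w : ℝ | 0 < w ∧ 1 - w / 2 * (1 + Z w) = 0} wc) :
    ∀ w : ℝ, 0 ≤ w → w < wc →
      HasSum (fun n : ℕ => w ^ n * a n) ((1 + Z w) / (1 - w / 2 * (1 + Z w))) :=
  generating_function_of_weighted_srw_general J z hz a ha Z hZ wc hwc
end
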